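/- arXiv:1002.4058 — 6 statements merged into one kernel-verified Lean document; each statement's English description precedes it below -/
import Mathlib

section
/- For all real z ≤ 1, e^z ≤ 1 + z + (e-2)z². -/
open scoped Nat

lemma exp_tsum' (x : ℝ) : Real.exp x = ∑' n : ℕ, x ^ n / n ! := by
  rw [Real.exp_eq_exp_ℝ, NormedSpace.exp_eq_tsum_div]

lemma tail_split (x : ℝ) :
    (∑ i ∈ Finset.range 2, x ^ i / i !) + (∑' n : ℕ, x ^ (n + 2) / (n + 2)!) = Real.exp x := by
  rw [exp_tsum' x]
  exact Summable.sum_add_tsum_nat_add 2 (Real.summable_pow_div_factorial x)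

theorem stmt_0 (z : ℝ) (hz : z ≤ 1) :
    Real.exp z ≤ 1 + z + (Real.exp 1 - 2) * z ^ 2 := by
  have he : (2.7182818283 : ℝ) < Real.exp 1 := by
    have := Real.exp_one_gt_d9; linarith
  rcases le_or_gt z 0 with hz0 | hz0
  · have h1 : 1 + (-z) + (-z) ^ 2 / 2 ≤ Real.exp (-z) := by
      have := Real.sum_le_exp_of_nonneg (x := -z) (by linarith) 3
      simp [Finset.sum_range_succ] at this
      nlinarith [this]
    have hpos : (0:ℝ) < 1 + (-z) + (-z) ^ 2 / 2 := by nlinarith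
    have h3 : Real.exp z ≤ 1 + z + z ^ 2 / 2 := by
      have h2 : Real.exp z * Real.exp (-z) = 1 := by rw [← Real.exp_add]; simp
      have key : (1 + (-z) + (-z) ^ 2 / 2) * (1 + z + z ^ 2 / 2) ≥ 1 := by nlinarith
      nlinarith [mul_le_mul_of_nonneg_right h1 (le_of_lt (Real.exp_pos z)),
        mul_pos hpos (Real.exp_pos z)]
    nlinarith
  · have hsum : Summable fun n : ℕ => z ^ (n + 2) / (n + 2)! :=
      (Real.summable_pow_div_factorial z).comp_injective (add_left_injective 2)
    have hsum1 : Summable fun n : ℕ => (1:ℝ) ^ (n + 2) / (n + 2)! :=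
      (Real.summable_pow_div_factorial 1).comp_injective (add_left_injective 2)
    have hsum2 : Summable fun n : ℕ => z ^ 2 / (n + 2)! := by
      have := hsum1.mul_left (z ^ 2)
      refine this.congr fun n => ?_
      simp [mul_one_div, div_eq_mul_inv]
    have hle : (∑' n : ℕ, z ^ (n + 2) / (n + 2)!) ≤ ∑' n : ℕ, z ^ 2 / (n + 2)! := by
      refine Summable.tsum_le_tsum (fun n => ?_) hsum hsum2
      have h2 : z ^ n ≤ 1 := pow_le_one₀ hz0.le hz
      have hzz : z ^ (n + 2) ≤ z ^ 2 := by
        have h1 : z ^ (n + 2) = z ^ 2 * z ^ n := by ring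
        rw [h1]; nlinarith [pow_pos hz0 2]
      have hfac : (0:ℝ) < (n + 2)! := by positivity
      exact div_le_div_of_nonneg_right hzz hfac.le
    have htsum2 : (∑' n : ℕ, z ^ 2 / (n + 2)!) = (Real.exp 1 - 2) * z ^ 2 := by
      have h1 : (∑' n : ℕ, (1:ℝ) ^ (n + 2) / (n + 2)!) = Real.exp 1 - 2 := by
        have := tail_split 1
        simp only [Finset.sum_range_succ, Finset.sum_range_zero, one_pow, one_div,
          pow_zero, pow_one, Nat.factorial] at this ⊢
        norm_num at this ⊢
        linarith
      calc (∑' n : ℕ, z ^ 2 / (n + 2)!)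
          = z ^ 2 * ∑' n : ℕ, (1:ℝ) ^ (n + 2) / (n + 2)! := by
            rw [← tsum_mul_left]
            exact tsum_congr fun n => by simp [mul_one_div, div_eq_mul_inv]
        _ = (Real.exp 1 - 2) * z ^ 2 := by rw [h1]; ring
    have hsplit := tail_split z
    simp [Finset.sum_range_succ] at hsplit
    calc Real.exp z = 1 + z + ∑' n : ℕ, z ^ (n + 2) / (n + 2)! := by linarith
      _ ≤ 1 + z + (Real.exp 1 - 2) * z ^ 2 := by rw [← htsum2]; linarith
end

section
/- Let X₁,...,X_T be real random variables adapted to a filtration with X_t ≤ R and E[X_t | X_1,...,X_{t-1}] = 0 for all t. Let S = Σ_{t=1}^T X_t and V = Σ_{t=1}^T E[X_t² | X_1,...,X_{t-1}]. Then for any δ > 0 and any fixed V' ≥ R² ln(1/δ)/(e-2), with probability at least 1-δ, S ≤ √((e-2) ln(1/δ)) · (V/√V' + √V'). -/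
/-!
For `l` with `l Xₜ ≤ 1`, the elementary inequality `eˣ ≤ 1 + x + (e - 2) x²` (valid for
`x ≤ 1`) and `E[Xₜ | ℱₜ₋₁] = 0` give `E[exp (l Xₜ) | ℱₜ₋₁] ≤ exp ((e - 2) l² E[Xₜ² | ℱₜ₋₁])`, so
`exp (l S - (e - 2) l² V)` is a supermartingale started at `1` and has expectation at most `1`.
By Markov's inequality, `l S - (e - 2) l² V < log (1 / δ)` with probability at least `1 - δ`.
Choosing `l = √((e - 2) log (1 / δ)) / ((e - 2) √V')`, the minimiser of
`log (1 / δ) / l + (e - 2) l V'`, turns this into the claimed bound; the constraint `l R ≤ 1` is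
exactly the assumption `V' ≥ R² log (1 / δ) / (e - 2)`.
-/

open MeasureTheory Real Finset

namespace Real

lemma hasSum_pow_div_factorial_exp (x : ℝ) : HasSum (fun n => x ^ n / n.factorial) (exp x) := by
  rw [exp_eq_exp_ℝ]
  exact NormedSpace.expSeries_div_hasSum_exp x

lemma exp_le_one_add_add_sq_div_two {x : ℝ} (hx : x ≤ 0) : exp x ≤ 1 + x + x ^ 2 / 2 := by
  have hTaylor : ∑ i ∈ range 4, (-x) ^ i / i.factorial ≤ exp (-x) :=
    sum_le_exp_of_nonneg (neg_nonneg.2 hx) 4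
  simp only [sum_range_succ, sum_range_zero, Nat.factorial] at hTaylor
  norm_num at hTaylor
  have hQ : 0 ≤ 1 + x + x ^ 2 / 2 := by nlinarith [sq_nonneg (x + 1)]
  have hprod : 1 ≤ exp (-x) * (1 + x + x ^ 2 / 2) := by
    nlinarith [mul_le_mul_of_nonneg_right hTaylor hQ, pow_nonneg (neg_nonneg.2 hx) 3,
      pow_nonneg (neg_nonneg.2 hx) 4, pow_nonneg (neg_nonneg.2 hx) 5]
  calc exp x ≤ exp x * (exp (-x) * (1 + x + x ^ 2 / 2)) :=
        le_mul_of_one_le_right (exp_nonneg x) hprod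
    _ = 1 + x + x ^ 2 / 2 := by rw [← mul_assoc, ← exp_add, add_neg_cancel, exp_zero, one_mul]

lemma exp_le_one_add_add_mul_sq {x : ℝ} (hx : x ≤ 1) :
    exp x ≤ 1 + x + (exp 1 - 2) * x ^ 2 := by
  rcases le_total x 0 with hx0 | hx0
  · have : (1 : ℝ) / 2 ≤ exp 1 - 2 := by linarith [exp_one_gt_d9]
    nlinarith [exp_le_one_add_add_sq_div_two hx0, sq_nonneg x]
  · -- compare the series of `x ^ 2 * exp 1` and `exp x` termwise: `x ^ n ≤ x ^ 2` for `n ≥ 2`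
    have hsum := ((hasSum_pow_div_factorial_exp 1).mul_left (x ^ 2)).sub
      (hasSum_pow_div_factorial_exp x)
    have hle := sum_le_hasSum (range 2) (fun n hn => ?_) hsum
    · simp only [sum_range_succ, sum_range_zero] at hle
      norm_num at hle
      linarith
    · have hn : 2 ≤ n := by simp only [mem_range, not_lt] at hn; omega
      rw [one_pow, sub_nonneg, ← mul_div_assoc, mul_one]
      exact div_le_div_of_nonneg_right (pow_le_pow_of_le_one hx0 hx hn) (by positivity)

end Real

section ConditionalExpectation

variable {Ω : Type*} {m m0 : MeasurableSpace Ω} {μ : Measure Ω}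

lemma integrable_exp_of_le [IsFiniteMeasure μ] {f : Ω → ℝ} (hf : AEStronglyMeasurable f μ)
    {C : ℝ} (hC : ∀ ω, f ω ≤ C) : Integrable (fun ω => exp (f ω)) μ :=
  .of_bound (continuous_exp.comp_aestronglyMeasurable hf) (exp C) <| ae_of_all _ fun ω => by
    rw [norm_of_nonneg (exp_nonneg _)]
    exact exp_le_exp.2 (hC ω)

lemma condExp_exp_mul_le [IsFiniteMeasure μ] (hm : m ≤ m0) {Y : Ω → ℝ} {l : ℝ}
    (hY : Integrable Y μ) (hY2 : Integrable (fun ω => Y ω ^ 2) μ) (hlY : ∀ ω, l * Y ω ≤ 1)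
    (hY0 : μ[Y|m] =ᵐ[μ] 0) :
    μ[fun ω => exp (l * Y ω)|m] ≤ᵐ[μ]
      fun ω => exp ((exp 1 - 2) * l ^ 2 * μ[fun ω => Y ω ^ 2|m] ω) := by
  set c := exp 1 - 2
  have hmono := condExp_mono (m := m) (integrable_exp_of_le (hY.1.const_mul l) hlY)
    (((integrable_const 1).add (hY.smul l)).add (hY2.smul (c * l ^ 2)))
    (ae_of_all _ fun ω => by
      simpa [mul_pow, mul_assoc] using exp_le_one_add_add_mul_sq (hlY ω))
  have hlin : μ[(fun _ => (1 : ℝ)) + l • Y + (c * l ^ 2) • fun ω => Y ω ^ 2|m] =ᵐ[μ]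
      (fun _ => (1 : ℝ)) + l • μ[Y|m] + (c * l ^ 2) • μ[fun ω => Y ω ^ 2|m] := by
    filter_upwards [condExp_add ((integrable_const 1).add (hY.smul l)) (hY2.smul (c * l ^ 2)) m,
      condExp_add (integrable_const 1) (hY.smul l) m, condExp_smul l Y m,
      condExp_smul (c * l ^ 2) (fun ω => Y ω ^ 2) m] with ω h1 h2 h3 h4
    simp only [h1, Pi.add_apply, h2, h3, h4, condExp_const hm]
  filter_upwards [hmono, hlin, hY0] with ω h1 h2 h3
  rw [h2] at h1
  simp only [Pi.add_apply, Pi.smul_apply, smul_eq_mul, h3, Pi.zero_apply, mul_zero,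
    add_zero] at h1
  linarith [add_one_le_exp (c * l ^ 2 * μ[fun ω => Y ω ^ 2|m] ω)]

lemma integral_mul_le_of_condExp_le [IsFiniteMeasure μ] (hm : m ≤ m0) {G f h : Ω → ℝ}
    (hG : StronglyMeasurable[m] G) (hG0 : ∀ᵐ ω ∂μ, 0 ≤ G ω) (hf : Integrable f μ)
    (hGf : Integrable (G * f) μ) (hGh : Integrable (G * h) μ) (hfh : μ[f|m] ≤ᵐ[μ] h) :
    ∫ ω, G ω * f ω ∂μ ≤ ∫ ω, G ω * h ω ∂μ := by
  have hpull := condExp_mul_of_stronglyMeasurable_left hG hGf hf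
  calc ∫ ω, G ω * f ω ∂μ = ∫ ω, μ[G * f|m] ω ∂μ := (integral_condExp hm).symm
    _ = ∫ ω, G ω * μ[f|m] ω ∂μ := integral_congr_ae hpull
    _ ≤ ∫ ω, G ω * h ω ∂μ := by
      refine integral_mono_ae (integrable_condExp.congr hpull) hGh ?_
      filter_upwards [hfh, hG0] with ω hω hGω
      exact mul_le_mul_of_nonneg_left hω hGω

lemma ofReal_one_sub_le_of_measure_compl_le [IsProbabilityMeasure μ] {s : Set Ω} {δ : ℝ}
    (hδ : 0 ≤ δ) (hs : μ sᶜ ≤ ENNReal.ofReal δ) : ENNReal.ofReal (1 - δ) ≤ μ s := by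
  calc ENNReal.ofReal (1 - δ) = 1 - ENNReal.ofReal δ := by
        rw [ENNReal.ofReal_sub _ hδ, ENNReal.ofReal_one]
    _ ≤ 1 - μ sᶜ := tsub_le_tsub_left hs 1
    _ ≤ μ s := by
      rw [tsub_le_iff_right, ← measure_univ (μ := μ)]
      exact measure_univ_le_add_compl s

end ConditionalExpectation

section Parameter

variable {c L V' : ℝ}

lemma sqrt_mul_div_mul_sqrt_mul_le_one (hc : 0 < c) (hL : 0 ≤ L) (hV' : 0 < V') {R : ℝ}
    (hRV' : R ^ 2 * L / c ≤ V') : sqrt (c * L) / (c * sqrt V') * R ≤ 1 := by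
  refine (le_abs_self _).trans ((sq_le_one_iff_abs_le_one _).1 ?_)
  rw [div_mul_eq_mul_div, div_pow, mul_pow, mul_pow, sq_sqrt (by positivity),
    sq_sqrt hV'.le, div_le_one (by positivity)]
  rw [div_le_iff₀ hc] at hRV'
  nlinarith

lemma sqrt_mul_div_mul_sqrt_mul_eq (hc : 0 < c) (hL : 0 ≤ L) (hV' : 0 < V') (v : ℝ) :
    sqrt (c * L) / (c * sqrt V') * (sqrt (c * L) * (v / sqrt V' + sqrt V')) =
      L + c * (sqrt (c * L) / (c * sqrt V')) ^ 2 * v := by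
  have hs : 0 < sqrt V' := sqrt_pos.2 hV'
  field_simp
  rw [sq_sqrt (by positivity), sq_sqrt hV'.le]
  ring

end Parameter

section ExponentialProcess

variable {Ω : Type*} {m0 : MeasurableSpace Ω} (μ : Measure Ω) (ℱ : Filtration ℕ m0)
  (X : ℕ → Ω → ℝ)

noncomputable def predictableVariation (n : ℕ) (ω : Ω) : ℝ :=
  ∑ t ∈ Icc 1 n, μ[fun ω' => X t ω' ^ 2|ℱ (t - 1)] ω

noncomputable def freedmanProcess (l : ℝ) (n : ℕ) (ω : Ω) : ℝ :=
  exp (l * ∑ t ∈ Icc 1 n, X t ω - (exp 1 - 2) * l ^ 2 * predictableVariation μ ℱ X n ω)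

variable {μ ℱ X}

lemma freedmanProcess_zero (l : ℝ) : freedmanProcess μ ℱ X l 0 = fun _ => 1 := by
  ext ω
  simp [freedmanProcess, predictableVariation]

lemma freedmanProcess_succ (l : ℝ) (n : ℕ) (ω : Ω) :
    freedmanProcess μ ℱ X l (n + 1) ω = freedmanProcess μ ℱ X l n ω *
      exp (-((exp 1 - 2) * l ^ 2) * μ[fun ω' => X (n + 1) ω' ^ 2|ℱ n] ω) *
      exp (l * X (n + 1) ω) := by
  simp only [freedmanProcess, predictableVariation, sum_Icc_succ_top (Nat.le_add_left 1 n),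
    Nat.add_sub_cancel, ← exp_add]
  ring_nf

lemma stronglyMeasurable_predictableVariation (n : ℕ) :
    StronglyMeasurable[ℱ n] (predictableVariation μ ℱ X n) :=
  Finset.stronglyMeasurable_fun_sum _ fun t ht =>
    stronglyMeasurable_condExp.mono (ℱ.mono (by simp only [mem_Icc] at ht; omega))

lemma stronglyMeasurable_freedmanProcess (hadapt : ∀ t, StronglyMeasurable[ℱ t] (X t)) (l : ℝ)
    (n : ℕ) : StronglyMeasurable[ℱ n] (freedmanProcess μ ℱ X l n) := by
  have hS : StronglyMeasurable[ℱ n] fun ω => ∑ t ∈ Icc 1 n, X t ω :=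
    Finset.stronglyMeasurable_fun_sum _ fun t ht =>
      (hadapt t).mono (ℱ.mono (mem_Icc.1 ht).2)
  exact continuous_exp.comp_stronglyMeasurable
    ((hS.const_mul l).sub ((stronglyMeasurable_predictableVariation n).const_mul _))

theorem integrable_and_integral_freedmanProcess_le_one [IsProbabilityMeasure μ]
    (hadapt : ∀ t, StronglyMeasurable[ℱ t] (X t)) (hint : ∀ t, Integrable (X t) μ)
    (hint2 : ∀ t, Integrable (fun ω => X t ω ^ 2) μ) {l : ℝ} (hlX : ∀ t ω, l * X t ω ≤ 1)
    {n : ℕ} (hmds : ∀ t, 1 ≤ t → t ≤ n → μ[X t|ℱ (t - 1)] =ᵐ[μ] 0) :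
    Integrable (freedmanProcess μ ℱ X l n) μ ∧ ∫ ω, freedmanProcess μ ℱ X l n ω ∂μ ≤ 1 := by
  induction n with
  | zero => simp [freedmanProcess_zero]
  | succ n ih =>
    obtain ⟨hMint, hMle⟩ := ih fun t h1 h2 => hmds t h1 (by omega)
    set M := freedmanProcess μ ℱ X l n
    set σ := μ[fun ω' => X (n + 1) ω' ^ 2|ℱ n]
    set c := exp 1 - 2
    set G := fun ω => M ω * exp (-(c * l ^ 2) * σ ω)
    set f := fun ω => exp (l * X (n + 1) ω)
    have hsplit : freedmanProcess μ ℱ X l (n + 1) = G * f :=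
      funext (freedmanProcess_succ l n)
    have hGh : (G * fun ω => exp (c * l ^ 2 * σ ω)) = M := by
      ext ω
      simp only [G, Pi.mul_apply, mul_assoc, ← exp_add, neg_mul, neg_add_cancel, exp_zero,
        mul_one]
    have hGM : ∀ᵐ ω ∂μ, G ω ≤ M ω := by
      filter_upwards [condExp_nonneg (m := ℱ n) (μ := μ)
        (ae_of_all _ fun ω => sq_nonneg (X (n + 1) ω))] with ω hσ
      refine mul_le_of_le_one_right (exp_nonneg _) (exp_le_one_iff.2 ?_)
      have hcl : 0 ≤ c * l ^ 2 := mul_nonneg (by linarith [exp_one_gt_d9]) (sq_nonneg l)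
      nlinarith [mul_nonneg hcl hσ]
    have hG0 : ∀ ω, 0 ≤ G ω := fun ω => mul_nonneg (exp_nonneg _) (exp_nonneg _)
    have hGmeas : StronglyMeasurable[ℱ n] G :=
      (stronglyMeasurable_freedmanProcess hadapt l n).mul
        (continuous_exp.comp_stronglyMeasurable (stronglyMeasurable_condExp.const_mul _))
    have hf : Integrable f μ :=
      integrable_exp_of_le ((hint (n + 1)).1.const_mul l) (hlX (n + 1))
    have hGf : Integrable (G * f) μ := by
      have hmeas : StronglyMeasurable (freedmanProcess μ ℱ X l (n + 1)) :=
        (stronglyMeasurable_freedmanProcess hadapt l (n + 1)).mono (ℱ.le _)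
      refine (hMint.const_mul (exp 1)).mono' (hsplit ▸ hmeas.aestronglyMeasurable) ?_
      filter_upwards [hGM] with ω hω
      rw [Pi.mul_apply, norm_of_nonneg (mul_nonneg (hG0 ω) (exp_nonneg _)), mul_comm (exp 1)]
      exact mul_le_mul hω (exp_le_exp.2 (hlX _ _)) (exp_nonneg _) (exp_nonneg _)
    refine ⟨hsplit ▸ hGf, ?_⟩
    calc ∫ ω, freedmanProcess μ ℱ X l (n + 1) ω ∂μ = ∫ ω, G ω * f ω ∂μ := by rw [hsplit]; rfl
      _ ≤ ∫ ω, G ω * exp (c * l ^ 2 * σ ω) ∂μ :=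
        integral_mul_le_of_condExp_le (ℱ.le n) hGmeas (ae_of_all _ hG0) hf hGf (hGh ▸ hMint)
          (condExp_exp_mul_le (ℱ.le n) (hint _) (hint2 _) (hlX _)
            (hmds (n + 1) (by omega) le_rfl))
      _ = ∫ ω, M ω ∂μ := by rw [← hGh]; rfl
      _ ≤ 1 := hMle

theorem measure_one_div_le_freedmanProcess_le [IsProbabilityMeasure μ]
    (hadapt : ∀ t, StronglyMeasurable[ℱ t] (X t)) (hint : ∀ t, Integrable (X t) μ)
    (hint2 : ∀ t, Integrable (fun ω => X t ω ^ 2) μ) {l : ℝ} (hlX : ∀ t ω, l * X t ω ≤ 1)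
    {n : ℕ} (hmds : ∀ t, 1 ≤ t → t ≤ n → μ[X t|ℱ (t - 1)] =ᵐ[μ] 0) {δ : ℝ} (hδ : 0 < δ) :
    μ {ω | 1 / δ ≤ freedmanProcess μ ℱ X l n ω} ≤ ENNReal.ofReal δ := by
  obtain ⟨hMint, hMle⟩ := integrable_and_integral_freedmanProcess_le_one hadapt hint hint2 hlX hmds
  have hMarkov := (mul_meas_ge_le_integral_of_nonneg (ae_of_all _ fun ω => exp_nonneg _) hMint
    (1 / δ)).trans hMle
  rw [one_div_mul_eq_div, div_le_one hδ] at hMarkov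
  exact (ENNReal.le_ofReal_iff_toReal_le (measure_ne_top _ _) hδ.le).2 hMarkov

end ExponentialProcess

theorem stmt_1 {Ω : Type*} {m0 : MeasurableSpace Ω} {μ : Measure Ω} [IsProbabilityMeasure μ]
    (ℱ : Filtration ℕ m0) (T : ℕ) (X : ℕ → Ω → ℝ) (R : ℝ) (hR : 0 < R)
    (hadapt : ∀ t, StronglyMeasurable[ℱ t] (X t))
    (hbdd : ∀ t ω, X t ω ≤ R)
    (hint : ∀ t, Integrable (X t) μ)
    (hint2 : ∀ t, Integrable (fun ω => X t ω ^ 2) μ)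
    (hmds : ∀ t, 1 ≤ t → t ≤ T → μ[X t|ℱ (t - 1)] =ᵐ[μ] 0)
    (δ : ℝ) (hδ : 0 < δ) (V' : ℝ)
    (hV' : R ^ 2 * Real.log (1 / δ) / (Real.exp 1 - 2) ≤ V') :
    ENNReal.ofReal (1 - δ) ≤
      μ {ω | ∑ t ∈ Finset.Icc 1 T, X t ω ≤
        Real.sqrt ((Real.exp 1 - 2) * Real.log (1 / δ)) *
          ((∑ t ∈ Finset.Icc 1 T, (μ[fun ω' => X t ω' ^ 2|ℱ (t - 1)]) ω) / Real.sqrt V'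
            + Real.sqrt V')} := by
  rcases le_or_gt 1 δ with hδ1 | hδ1
  · simp [ENNReal.ofReal_eq_zero.2 (sub_nonpos.2 hδ1)]
  set c := exp 1 - 2
  set L := log (1 / δ)
  have hc : 0 < c := by linarith [exp_one_gt_d9]
  have hL : 0 < L := log_pos (by rw [lt_div_iff₀ hδ]; linarith)
  have hV'pos : 0 < V' := lt_of_lt_of_le (by positivity) hV'
  set l := sqrt (c * L) / (c * sqrt V')
  have hlX : ∀ t ω, l * X t ω ≤ 1 := fun t ω =>
    (mul_le_mul_of_nonneg_left (hbdd t ω) (by positivity)).trans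
      (sqrt_mul_div_mul_sqrt_mul_le_one hc hL.le hV'pos hV')
  refine ofReal_one_sub_le_of_measure_compl_le hδ.le ((measure_mono fun ω hω => ?_).trans
    (measure_one_div_le_freedmanProcess_le hadapt hint hint2 hlX hmds hδ))
  simp only [Set.mem_compl_iff, Set.mem_ofPred_eq, not_le] at hω
  have hlt := mul_lt_mul_of_pos_left hω (by positivity : 0 < l)
  rw [sqrt_mul_div_mul_sqrt_mul_eq hc hL.le hV'pos] at hlt
  rw [Set.mem_ofPred_eq, freedmanProcess, ← exp_log (one_div_pos.2 hδ), exp_le_exp]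
  unfold predictableVariation
  linarith
end

section
/- If X is a random variable with X ≤ R almost surely, E[X] = 0, and 0 ≤ λ ≤ 1/R, then E[e^{λX}] ≤ exp((e-2)λ² E[X²]). -/
open MeasureTheory

set_option maxHeartbeats 1000000

lemma exp_tsum_real (t : ℝ) : Real.exp t = ∑' n : ℕ, t ^ n / n.factorial := by
  rw [Real.exp_eq_exp_ℝ, NormedSpace.exp_eq_tsum_div]

lemma exp_split (x : ℝ) :
    Real.exp x = 1 + x + ∑' n : ℕ, x ^ (n + 2) / (n + 2).factorial := by
  rw [exp_tsum_real]
  rw [← Summable.sum_add_tsum_nat_add 2 (Real.summable_pow_div_factorial x)]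
  simp [Finset.sum_range_succ, Nat.factorial]

lemma exp_le_quad_of_nonneg {t : ℝ} (h0 : 0 ≤ t) (ht : t ≤ 1) :
    Real.exp t ≤ 1 + t + (Real.exp 1 - 2) * t ^ 2 := by
  have hsumm : ∀ x : ℝ, Summable (fun n : ℕ => x ^ (n + 2) / (n + 2).factorial) := by
    intro x
    exact (summable_nat_add_iff 2).2 (Real.summable_pow_div_factorial x)
  have he2 : ∑' n : ℕ, (1 : ℝ) ^ (n + 2) / (n + 2).factorial = Real.exp 1 - 2 := by
    have := exp_split 1
    simp only [one_pow] at this ⊢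
    linarith
  rw [exp_split t]
  have htail : ∑' n : ℕ, t ^ (n + 2) / (n + 2).factorial
      ≤ t ^ 2 * (Real.exp 1 - 2) := by
    rw [← he2, ← tsum_mul_left]
    refine Summable.tsum_le_tsum (fun n => ?_) (hsumm t) ?_
    · have h1 : t ^ (n + 2) ≤ t ^ 2 :=
        pow_le_pow_of_le_one h0 ht (by omega)
      have h2 : (0:ℝ) < ((n + 2).factorial : ℝ) := by positivity
      rw [one_pow, mul_one_div]
      exact (div_le_div_iff_of_pos_right h2).2 h1
    · exact Summable.mul_left _ ((summable_nat_add_iff 2).2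
        (Real.summable_pow_div_factorial 1))
  linarith

lemma exp_le_quad {t : ℝ} (ht : t ≤ 1) :
    Real.exp t ≤ 1 + t + (Real.exp 1 - 2) * t ^ 2 := by
  have he : (2.7182818283 : ℝ) < Real.exp 1 := Real.exp_one_gt_d9
  rcases le_or_gt t (-1) with hA | hA
  · have h1 : Real.exp t ≤ Real.exp (-1) := Real.exp_le_exp.2 (by linarith)
    have h2 : Real.exp (-1) * Real.exp 1 = 1 := by
      rw [← Real.exp_add]; norm_num
    have h3 : 0 < Real.exp (-1) := Real.exp_pos _
    have h4 : Real.exp (-1) < 1/2 := by nlinarith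
    nlinarith [mul_nonneg (neg_nonneg.2 (by linarith : t + 1 ≤ 0))
      (neg_nonneg.2 (by nlinarith : 1 + (Real.exp 1 - 2) * (t - 1) ≤ 0))]
  rcases le_or_gt t 0 with hB | hB
  · have habs : |t| ≤ 1 := abs_le.2 ⟨by linarith, by linarith⟩
    have h := Real.exp_bound habs (n := 4) (by norm_num)
    rw [abs_le] at h
    have hsum : ∑ m ∈ Finset.range 4, t ^ m / m.factorial
        = 1 + t + t ^ 2 / 2 + t ^ 3 / 6 := by
      norm_num [Finset.sum_range_succ, Nat.factorial]
    rw [hsum] at h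
    have h4 : |t| ^ 4 = t ^ 4 := (even_two.mul_right 2).pow_abs t
    have hle : Real.exp t ≤ 1 + t + t ^ 2 / 2 + t ^ 3 / 6 + t ^ 4 * (5 / 96) := by
      have h2 := h.2
      rw [h4] at h2
      norm_num [Nat.factorial] at h2
      linarith
    nlinarith [mul_nonneg (sq_nonneg t) (neg_nonneg.2 hB),
      mul_nonneg (by nlinarith : (0:ℝ) ≤ 1 - t ^ 2) (sq_nonneg t), sq_nonneg t]
  · exact exp_le_quad_of_nonneg hB.le ht

theorem stmt_4 {Ω : Type*} [MeasurableSpace Ω] (μ : Measure Ω) [IsProbabilityMeasure μ]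
    (X : Ω → ℝ) (R lam : ℝ) (hR : 0 < R) (hmeas : Measurable X)
    (hbound : ∀ᵐ ω ∂μ, X ω ≤ R)
    (hint : Integrable X μ) (hint2 : Integrable (fun ω => X ω ^ 2) μ)
    (hmean : ∫ ω, X ω ∂μ = 0) (hlam0 : 0 ≤ lam) (hlamR : lam ≤ 1 / R) :
    ∫ ω, Real.exp (lam * X ω) ∂μ ≤
      Real.exp ((Real.exp 1 - 2) * lam ^ 2 * ∫ ω, X ω ^ 2 ∂μ) := by
  set c : ℝ := Real.exp 1 - 2 with hc
  have hc0 : 0 ≤ c := by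
    have := Real.exp_one_gt_d9; rw [hc]; linarith
  have hptwise : ∀ᵐ ω ∂μ, Real.exp (lam * X ω)
      ≤ 1 + lam * X ω + c * lam ^ 2 * X ω ^ 2 := by
    filter_upwards [hbound] with ω hω
    have h1 : lam * X ω ≤ 1 := by
      calc lam * X ω ≤ lam * R := by nlinarith
        _ ≤ (1 / R) * R := by nlinarith
        _ = 1 := by field_simp
    have := exp_le_quad h1
    calc Real.exp (lam * X ω) ≤ 1 + lam * X ω + c * (lam * X ω) ^ 2 := this
      _ = 1 + lam * X ω + c * lam ^ 2 * X ω ^ 2 := by ring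
  have hA1 : Integrable (fun ω => 1 + lam * X ω) μ := by
    exact (integrable_const 1).add (hint.const_mul lam)
  have hB1 : Integrable (fun ω => c * lam ^ 2 * X ω ^ 2) μ := hint2.const_mul (c * lam ^ 2)
  have hintq : Integrable (fun ω => 1 + lam * X ω + c * lam ^ 2 * X ω ^ 2) μ := by
    exact hA1.add hB1
  have hintE : Integrable (fun ω => Real.exp (lam * X ω)) μ := by
    refine Integrable.mono' hintq ?_ ?_
    · exact ((hmeas.const_mul lam).exp).aestronglyMeasurable
    · filter_upwards [hptwise] with ω hω
      rw [Real.norm_eq_abs, abs_of_pos (Real.exp_pos _)]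
      exact hω
  have hIle : ∫ ω, Real.exp (lam * X ω) ∂μ
      ≤ ∫ ω, (1 + lam * X ω + c * lam ^ 2 * X ω ^ 2) ∂μ :=
    integral_mono_ae hintE hintq hptwise
  have hIq : ∫ ω, (1 + lam * X ω + c * lam ^ 2 * X ω ^ 2) ∂μ
      = 1 + c * lam ^ 2 * ∫ ω, X ω ^ 2 ∂μ := by
    rw [integral_add hA1 hB1, integral_add (integrable_const 1) (hint.const_mul lam),
      integral_const, integral_const_mul, integral_const_mul, hmean]
    simp
  rw [hIq] at hIle
  calc ∫ ω, Real.exp (lam * X ω) ∂μ ≤ 1 + c * lam ^ 2 * ∫ ω, X ω ^ 2 ∂μ := hIle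
    _ ≤ Real.exp (c * lam ^ 2 * ∫ ω, X ω ^ 2 ∂μ) := by
        have := Real.add_one_le_exp (c * lam ^ 2 * ∫ ω, X ω ^ 2 ∂μ)
        linarith
end

section
/- With Exp4.P probabilities p_j = (1−γ)Σ_i (w_i/W)ξ_j^i + p_min (γ = K·p_min < 1), rewards r ∈ [0,1]^K, chosen arm j_t, importance-weighted reward estimates r̂_j = r_j·1[j = j_t]/p_j, and ŷ_i = Σ_j ξ_j^i r̂_j, it holds that Σ_i (w_i/W) ŷ_i ≤ r_{j_t}/(1−γ). -/
theorem stmt_8 (K N : ℕ) (hK : 0 < K) (hN : 0 < N) (pmin γ : ℝ) (hpmin : 0 < pmin)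
    (hγ : γ = K * pmin) (hγ1 : γ < 1)
    (w : Fin N → ℝ) (hw : ∀ i, 0 ≤ w i) (W : ℝ) (hW : W = ∑ i, w i) (hWpos : 0 < W)
    (ξ : Fin N → Fin K → ℝ) (hξ0 : ∀ i j, 0 ≤ ξ i j) (hξ1 : ∀ i, ∑ j, ξ i j = 1)
    (p : Fin K → ℝ) (hp : ∀ j, p j = (1 - γ) * (∑ i, (w i / W) * ξ i j) + pmin)
    (r : Fin K → ℝ) (hr : ∀ j, r j ∈ Set.Icc (0 : ℝ) 1)
    (jt : Fin K)
    (rhat : Fin K → ℝ) (hrhat : ∀ j, rhat j = if j = jt then r j / p j else 0)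
    (yhat : Fin N → ℝ) (hyhat : ∀ i, yhat i = ∑ j, ξ i j * rhat j) :
    ∑ i, (w i / W) * yhat i ≤ r jt / (1 - γ) := by
  set S : ℝ := ∑ i, (w i / W) * ξ i jt with hS
  have hSnonneg : 0 ≤ S := Finset.sum_nonneg fun i _ =>
    mul_nonneg (div_nonneg (hw i) hWpos.le) (hξ0 i jt)
  have h1γ : 0 < 1 - γ := by linarith
  have hpj : p jt = (1 - γ) * S + pmin := hp jt
  have hpjpos : 0 < p jt := by
    rw [hpj]; positivity
  have hyi : ∀ i, yhat i = ξ i jt * (r jt / p jt) := by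
    intro i
    rw [hyhat i, Finset.sum_eq_single jt]
    · rw [hrhat jt]; simp
    · intro b _ hb; rw [hrhat b]; simp [hb]
    · simp
  have key : ∑ i, (w i / W) * yhat i = (r jt / p jt) * S := by
    rw [hS, Finset.mul_sum]
    apply Finset.sum_congr rfl
    intro i _
    rw [hyi i]; ring
  rw [key]
  have hr0 : 0 ≤ r jt := (hr jt).1
  rw [div_mul_eq_mul_div, div_le_div_iff₀ hpjpos h1γ]
  have : S * (1 - γ) ≤ p jt := by rw [hpj]; nlinarith
  nlinarith
end

section
/- With the setup of Exp4.P (probabilities p_j = (1−γ)Σ_i (w_i/W)ξ_j^i + p_min with γ = K·p_min < 1, advice distributions ξ^i, rewards r ∈ [0,1]^K, chosen arm j_t, and r̂_j = r_j·1[j = j_t]/p_j, ŷ_i = Σ_j ξ_j^i r̂_j), it holds that Σ_i (w_i/W) ŷ_i² ≤ r̂_{j_t}/(1−γ). -/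
theorem stmt_9 (K N : ℕ) (hK : 0 < K) (hN : 0 < N) (pmin γ : ℝ) (hpmin : 0 < pmin)
    (hγ : γ = K * pmin) (hγ1 : γ < 1)
    (w : Fin N → ℝ) (hw : ∀ i, 0 ≤ w i) (W : ℝ) (hW : W = ∑ i, w i) (hWpos : 0 < W)
    (ξ : Fin N → Fin K → ℝ) (hξ0 : ∀ i j, 0 ≤ ξ i j) (hξ1 : ∀ i, ∑ j, ξ i j = 1)
    (p : Fin K → ℝ) (hp : ∀ j, p j = (1 - γ) * (∑ i, (w i / W) * ξ i j) + pmin)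
    (r : Fin K → ℝ) (hr : ∀ j, r j ∈ Set.Icc (0 : ℝ) 1)
    (jt : Fin K)
    (rhat : Fin K → ℝ) (hrhat : ∀ j, rhat j = if j = jt then r j / p j else 0)
    (yhat : Fin N → ℝ) (hyhat : ∀ i, yhat i = ∑ j, ξ i j * rhat j) :
    ∑ i, (w i / W) * yhat i ^ 2 ≤ rhat jt / (1 - γ) := by
  have h1γ : 0 < 1 - γ := by linarith
  have hSnn : 0 ≤ ∑ i, (w i / W) * ξ i jt :=
    Finset.sum_nonneg fun i _ => mul_nonneg (div_nonneg (hw i) hWpos.le) (hξ0 i jt)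
  have hppos : 0 < p jt := by
    have := hp jt
    nlinarith
  have hrjt := hr jt
  have hrhjt : rhat jt = r jt / p jt := by rw [hrhat]; simp
  have hrnn : 0 ≤ rhat jt := by rw [hrhjt]; exact div_nonneg hrjt.1 hppos.le
  have hy : ∀ i, yhat i = ξ i jt * rhat jt := by
    intro i
    rw [hyhat]
    rw [Finset.sum_eq_single jt]
    · intro b _ hb; rw [hrhat]; simp [hb]
    · intro h; exact absurd (Finset.mem_univ jt) h
  have hξle : ∀ i, ξ i jt ≤ 1 := by
    intro i
    calc ξ i jt ≤ ∑ j, ξ i j :=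
          Finset.single_le_sum (fun j _ => hξ0 i j) (Finset.mem_univ jt)
      _ = 1 := hξ1 i
  calc ∑ i, (w i / W) * yhat i ^ 2
      = (rhat jt)^2 * ∑ i, (w i / W) * (ξ i jt)^2 := by
        rw [Finset.mul_sum]
        exact Finset.sum_congr rfl fun i _ => by rw [hy i]; ring
    _ ≤ (rhat jt)^2 * ∑ i, (w i / W) * ξ i jt := by
        apply mul_le_mul_of_nonneg_left _ (sq_nonneg _)
        apply Finset.sum_le_sum
        intro i _
        apply mul_le_mul_of_nonneg_left _ (div_nonneg (hw i) hWpos.le)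
        nlinarith [hξ0 i jt, hξle i]
    _ ≤ (rhat jt)^2 * (p jt / (1 - γ)) := by
        apply mul_le_mul_of_nonneg_left _ (sq_nonneg _)
        rw [le_div_iff₀ h1γ]
        have := hp jt
        nlinarith
    _ = rhat jt * (rhat jt * p jt) / (1 - γ) := by ring
    _ = rhat jt * r jt / (1 - γ) := by
        rw [hrhjt, div_mul_cancel₀ _ hppos.ne']
    _ ≤ rhat jt / (1 - γ) := by
        apply div_le_div_of_nonneg_right _ h1γ.le
        nlinarith [hrjt.2]
end

section
/- Under the conditions of the Exp4.P theorem, with probability at least 1 − δ: for every expert i, G_i ≤ Ĝ_i + √(ln(N/δ))·σ̂_i, where Ĝ_i = Σ_t ŷ_i(t) and σ̂_i = √(KT) + (1/√(KT))·Σ_t v̂_i(t). -/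
/-!
Fix an expert and put `b = √(ln(N/δ) / (KT)) ≤ 1`. In each round the importance-weighted
estimate `ŷ(t)` is unbiased with second moment at most `v̂(t)`, so `eᶻ ≤ 1 + z + z²` (for `z ≤ 1`)
gives `E_t[exp(b (x(t) - ŷ(t)) - b² v̂(t))] ≤ 1`. As the sampling probabilities only depend on
past draws, the product of these factors over all rounds has expectation at most `1`, and
Markov's inequality bounds the probability of `b (G - Ĝ) - b² ∑ₜ v̂(t) ≥ ln(N/δ)` by `δ/N`. Off
that event, dividing by `b` gives `G ≤ Ĝ + √(ln(N/δ)) σ̂`; a union bound over the `N` experts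
finishes.
-/

open Finset Real

theorem Real.exp_le_one_add_add_sq {x : ℝ} (hx : x ≤ 1) : exp x ≤ 1 + x + x ^ 2 := by
  rcases le_total x (-1) with h | h
  · calc exp x ≤ 1 := exp_le_one_iff.2 (by linarith)
      _ ≤ 1 + x + x ^ 2 := by nlinarith
  · have := (abs_le.1 (abs_exp_sub_one_sub_id_le (abs_le.2 ⟨h, hx⟩))).2
    linarith

theorem sum_mul_exp_le_exp_sum_mul_sq {ι : Type*} [Fintype ι] {q z : ι → ℝ}
    (hq : ∀ i, 0 ≤ q i) (hq1 : ∑ i, q i = 1) (hz : ∑ i, q i * z i = 0) (hz1 : ∀ i, z i ≤ 1) :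
    ∑ i, q i * exp (z i) ≤ exp (∑ i, q i * z i ^ 2) :=
  calc ∑ i, q i * exp (z i) ≤ ∑ i, q i * (1 + z i + z i ^ 2) :=
        sum_le_sum fun i _ => mul_le_mul_of_nonneg_left (exp_le_one_add_add_sq (hz1 i)) (hq i)
    _ = 1 + ∑ i, q i * z i ^ 2 := by
        simp only [mul_add, mul_one, sum_add_distrib, hq1, hz, add_zero]
    _ ≤ exp (∑ i, q i * z i ^ 2) := by linarith [add_one_le_exp (∑ i, q i * z i ^ 2)]

theorem sum_mul_exp_importance_weighted_le_one {ι : Type*} [Fintype ι] {q ξ r : ι → ℝ} {b : ℝ}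
    (hq : ∀ j, 0 < q j) (hq1 : ∑ j, q j = 1) (hξ : ∀ j, 0 ≤ ξ j) (hξ1 : ∑ j, ξ j ≤ 1)
    (hr : ∀ j, r j ∈ Set.Icc (0 : ℝ) 1) (hb0 : 0 ≤ b) (hb1 : b ≤ 1) :
    ∑ k, q k * exp (b * (∑ j, ξ j * r j - ξ k * r k / q k) - b ^ 2 * ∑ j, ξ j / q j) ≤ 1 := by
  set x := ∑ j, ξ j * r j
  set v := ∑ j, ξ j / q j
  have hξr : ∀ j, 0 ≤ ξ j * r j := fun j => mul_nonneg (hξ j) (hr j).1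
  have hx1 : x ≤ 1 := (sum_le_sum fun j _ => mul_le_of_le_one_right (hξ j) (hr j).2).trans hξ1
  have hmean : ∑ k, q k * (ξ k * r k / q k) = x :=
    sum_congr rfl fun k _ => mul_div_cancel₀ _ (hq k).ne'
  have hz : ∑ k, q k * (b * (x - ξ k * r k / q k)) = 0 := by
    simp only [mul_sub, mul_left_comm (q _) b, ← mul_sum, sum_sub_distrib, ← sum_mul, hq1, hmean]
    ring
  -- the variance of the importance-weighted estimate is at most `v`
  have hsq : ∑ k, q k * (b * (x - ξ k * r k / q k)) ^ 2 ≤ b ^ 2 * v := by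
    have hterm : ∀ k, q k * (b * (x - ξ k * r k / q k)) ^ 2
        = b ^ 2 * (q k * x ^ 2 - 2 * x * (q k * (ξ k * r k / q k)) + (ξ k * r k) ^ 2 / q k) := by
      intro k; field_simp [(hq k).ne']; ring
    have hsecond : ∑ k, (ξ k * r k) ^ 2 / q k ≤ v := by
      refine sum_le_sum fun k _ => div_le_div_of_nonneg_right ?_ (hq k).le
      have hξrk : ξ k * r k ≤ ξ k := mul_le_of_le_one_right (hξ k) (hr k).2
      have hξk : ξ k ≤ 1 := (single_le_sum (fun j _ => hξ j) (mem_univ k)).trans hξ1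
      nlinarith [hξr k]
    rw [sum_congr rfl fun k _ => hterm k, ← mul_sum, sum_add_distrib, sum_sub_distrib,
      ← sum_mul, ← mul_sum, hq1, hmean]
    exact mul_le_mul_of_nonneg_left (by nlinarith) (sq_nonneg b)
  have hz1 : ∀ k, b * (x - ξ k * r k / q k) ≤ 1 := fun k => by
    have := div_nonneg (hξr k) (hq k).le
    nlinarith
  calc ∑ k, q k * exp (b * (x - ξ k * r k / q k) - b ^ 2 * v)
      = (∑ k, q k * exp (b * (x - ξ k * r k / q k))) * exp (-(b ^ 2 * v)) := by
        simp only [sub_eq_add_neg, exp_add, sum_mul, mul_assoc]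
    _ ≤ exp (b ^ 2 * v) * exp (-(b ^ 2 * v)) := by
        gcongr
        exact (sum_mul_exp_le_exp_sum_mul_sq (fun k => (hq k).le) hq1 hz hz1).trans
          (exp_le_exp.2 hsq)
    _ = 1 := by rw [← exp_add, add_neg_cancel, exp_zero]

def IsNonanticipating {n : ℕ} {α β : Type*} (φ : Fin n → (Fin n → α) → β) : Prop :=
  ∀ t (js js' : Fin n → α), (∀ s ≤ t, js s = js' s) → φ t js = φ t js'

theorem Fin.snoc_apply_eq_of_le_castSucc {α : Type*} {n : ℕ} {js js' : Fin n → α} {k k' : α}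
    {t : Fin n} (h : ∀ s ≤ t, js s = js' s) {s : Fin (n + 1)} (hs : s ≤ t.castSucc) :
    snoc (α := fun _ => α) js k s = snoc (α := fun _ => α) js' k' s := by
  have hs' : s ≠ last n := (lt_of_le_of_lt hs (castSucc_lt_last t)).ne
  rw [← castSucc_castPred s hs', snoc_castSucc, snoc_castSucc]
  exact h _ (by rwa [← castSucc_le_castSucc_iff, castSucc_castPred])

namespace IsNonanticipating

open Fin

variable {α : Type*} {n : ℕ}

theorem comp_snoc {β : Type*} {φ : Fin (n + 1) → (Fin (n + 1) → α) → β}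
    (hφ : IsNonanticipating φ) (k₀ : α) :
    IsNonanticipating fun (t : Fin n) (js : Fin n → α) => φ t.castSucc (snoc js k₀) :=
  fun _ _ _ h => hφ _ _ _ fun _ hs => snoc_apply_eq_of_le_castSucc h hs

theorem sum_prod_eq [Fintype α] {φ : Fin (n + 1) → (Fin (n + 1) → α) → ℝ}
    (hφ : IsNonanticipating φ) (k₀ : α) :
    ∑ js, ∏ t, φ t js = ∑ js : Fin n → α,
      (∏ t : Fin n, φ t.castSucc (snoc js k₀)) * ∑ k, φ (last n) (snoc js k) := by
  rw [← (snocEquiv fun _ => α).sum_comp, Fintype.sum_prod_type, sum_comm]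
  refine sum_congr rfl fun js _ => ?_
  rw [mul_sum]
  refine sum_congr rfl fun k _ => ?_
  rw [prod_univ_castSucc]
  congr 2
  funext t
  exact hφ _ _ _ fun _ hs => snoc_apply_eq_of_le_castSucc (fun _ _ => rfl) hs

end IsNonanticipating

open Function Fin in
theorem sum_prod_le_one_of_nonanticipating {α : Type*} [Fintype α] :
    ∀ {n : ℕ} {φ : Fin n → (Fin n → α) → ℝ}, (∀ t js, 0 ≤ φ t js) → IsNonanticipating φ →
      (∀ t js, ∑ k, φ t (update js t k) ≤ 1) → ∑ js, ∏ t, φ t js ≤ 1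
  | 0, _, _, _, _ => by simp
  | n + 1, φ, hφ0, hφ, hstep => by
    rcases isEmpty_or_nonempty α with _ | ⟨⟨k₀⟩⟩
    · simp
    rw [hφ.sum_prod_eq k₀]
    calc _ ≤ ∑ js : Fin n → α, (∏ t : Fin n, φ t.castSucc (snoc js k₀)) * 1 := by
          gcongr with js
          · exact prod_nonneg fun t _ => hφ0 _ _
          · simpa only [update_snoc_last] using hstep (last n) (snoc js k₀)
      _ ≤ 1 := by
          simp only [mul_one]
          refine sum_prod_le_one_of_nonanticipating (fun _ _ => hφ0 _ _) (hφ.comp_snoc k₀)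
            fun t js => ?_
          simpa only [snoc_update] using hstep t.castSucc (snoc js k₀)

open Function Fin in
theorem sum_prod_eq_one_of_nonanticipating {α : Type*} [Fintype α] [Nonempty α] :
    ∀ {n : ℕ} {φ : Fin n → (Fin n → α) → ℝ}, IsNonanticipating φ →
      (∀ t js, ∑ k, φ t (update js t k) = 1) → ∑ js, ∏ t, φ t js = 1
  | 0, _, _, _ => by simp
  | n + 1, φ, hφ, hstep => by
    obtain ⟨k₀⟩ := ‹Nonempty α›
    rw [hφ.sum_prod_eq k₀]
    have hlast : ∀ js : Fin n → α, ∑ k, φ (last n) (snoc js k) = 1 := fun js => by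
      simpa only [update_snoc_last] using hstep (last n) (snoc js k₀)
    simp only [hlast, mul_one]
    refine sum_prod_eq_one_of_nonanticipating (hφ.comp_snoc k₀) fun t js => ?_
    simpa only [snoc_update] using hstep t.castSucc (snoc js k₀)

theorem sum_filter_le_exp_neg_of_sum_mul_exp_le_one {ι : Type*} [Fintype ι] {w f : ι → ℝ}
    (hw : ∀ x, 0 ≤ w x) (h : ∑ x, w x * exp (f x) ≤ 1) (c : ℝ) :
    ∑ x with c ≤ f x, w x ≤ exp (-c) :=
  calc ∑ x with c ≤ f x, w x ≤ ∑ x with c ≤ f x, w x * exp (f x) * exp (-c) := by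
        refine sum_le_sum fun x hx => ?_
        rw [mul_assoc, ← exp_add]
        exact le_mul_of_one_le_right (hw x) (one_le_exp (by linarith [(mem_filter.1 hx).2]))
    _ ≤ (∑ x, w x * exp (f x)) * exp (-c) := by
        rw [sum_mul]
        exact sum_le_sum_of_subset_of_nonneg (filter_subset _ _) fun x _ _ => by
          have := hw x
          positivity
    _ ≤ exp (-c) := mul_le_of_le_one_left (exp_pos _).le h

theorem sum_filter_not_forall_le_sum_sum_filter_not {ι κ : Type*} [Fintype ι] [Fintype κ]
    {w : ι → ℝ} (hw : ∀ x, 0 ≤ w x) (P : κ → ι → Prop) [∀ k, DecidablePred (P k)]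
    [DecidablePred fun x => ∀ k, P k x] :
    ∑ x with ¬ ∀ k, P k x, w x ≤ ∑ k, ∑ x with ¬ P k x, w x := by
  simp only [sum_filter]
  rw [sum_comm]
  refine sum_le_sum fun x _ => ?_
  split_ifs with h
  · exact sum_nonneg fun k _ => by split_ifs <;> simp [hw]
  · obtain ⟨k, hk⟩ := not_forall.1 h
    calc w x = if ¬ P k x then w x else 0 := (if_pos hk).symm
      _ ≤ _ := single_le_sum (f := fun k => if ¬ P k x then w x else 0)
          (fun k _ => by split_ifs <;> simp [hw]) (mem_univ k)

theorem one_sub_sum_sum_filter_not_le_sum_filter_forall {ι κ : Type*} [Fintype ι] [Fintype κ]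
    {w : ι → ℝ} (hw : ∀ x, 0 ≤ w x) (hw1 : ∑ x, w x = 1) (P : κ → ι → Prop)
    [∀ k, DecidablePred (P k)] [DecidablePred fun x => ∀ k, P k x] :
    1 - ∑ k, ∑ x with ¬ P k x, w x ≤ ∑ x with ∀ k, P k x, w x := by
  have := sum_filter_not_forall_le_sum_sum_filter_not hw P
  rw [← hw1, ← sum_filter_add_sum_filter_not univ fun x => ∀ k, P k x]
  linarith

theorem le_sqrt_mul_add_of_mul_sub_sq_mul_le {L c D V : ℝ} (hL : 0 < L) (hc : 0 < c)
    (h : √L / √c * D - (√L / √c) ^ 2 * V ≤ L) : D ≤ √L * (√c + 1 / √c * V) := by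
  have hb : 0 < √L / √c := div_pos (sqrt_pos.2 hL) (sqrt_pos.2 hc)
  have hkey : √L * (√c + 1 / √c * V) * (√L / √c) = L + (√L / √c) ^ 2 * V := by
    field_simp
    rw [sq_sqrt hL.le, sq_sqrt hc.le]
    ring
  rw [← mul_le_mul_iff_of_pos_right hb, hkey]
  linarith

namespace Exp4P

variable {K T : ℕ}

-- For one expert with advice `ξ`: `gain` is `G`, `estGain` is `Ĝ`, `estVar` is `∑ₜ v̂(t)`, and
-- `pathProb p js` is the probability that the arms `js` are drawn.

noncomputable def gain (r ξ : Fin T → Fin K → ℝ) : ℝ := ∑ t, ∑ j, ξ t j * r t j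

noncomputable def estGain (r ξ : Fin T → Fin K → ℝ) (p : Fin T → (Fin T → Fin K) → Fin K → ℝ)
    (js : Fin T → Fin K) : ℝ :=
  ∑ t, ξ t (js t) * r t (js t) / p t js (js t)

noncomputable def estVar (ξ : Fin T → Fin K → ℝ) (p : Fin T → (Fin T → Fin K) → Fin K → ℝ)
    (js : Fin T → Fin K) : ℝ :=
  ∑ t, ∑ j, ξ t j / p t js j

noncomputable def pathProb (p : Fin T → (Fin T → Fin K) → Fin K → ℝ) (js : Fin T → Fin K) : ℝ :=
  ∏ t, p t js (js t)

variable {r ξ : Fin T → Fin K → ℝ} {p : Fin T → (Fin T → Fin K) → Fin K → ℝ}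

section Predictable

variable (hppast : ∀ (t : Fin T) (js js' : Fin T → Fin K),
  (∀ s : Fin T, s < t → js s = js' s) → p t js = p t js')
include hppast

theorem apply_update_self (t : Fin T) (js : Fin T → Fin K) (k : Fin K) :
    p t (Function.update js t k) = p t js :=
  hppast t _ _ fun _ hs => Function.update_of_ne hs.ne _ _

theorem isNonanticipating_comp {β : Type*} (F : Fin T → (Fin K → ℝ) → Fin K → β) :
    IsNonanticipating fun t js => F t (p t js) (js t) :=
  fun t js js' h => by dsimp only; rw [hppast t js js' fun s hs => h s hs.le, h t le_rfl]

theorem sum_pathProb [NeZero K] (hpsum : ∀ t js, ∑ j, p t js j = 1) :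
    ∑ js, pathProb p js = 1 :=
  sum_prod_eq_one_of_nonanticipating (isNonanticipating_comp hppast fun _ q k => q k)
    fun t js => by simp only [Function.update_self, apply_update_self hppast, hpsum]

theorem sum_pathProb_mul_exp_le_one (hr : ∀ t j, r t j ∈ Set.Icc (0 : ℝ) 1)
    (hξ0 : ∀ t j, 0 ≤ ξ t j) (hξ1 : ∀ t, ∑ j, ξ t j ≤ 1) (hppos : ∀ t js j, 0 < p t js j)
    (hpsum : ∀ t js, ∑ j, p t js j = 1) {b : ℝ} (hb0 : 0 ≤ b) (hb1 : b ≤ 1) :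
    ∑ js, pathProb p js * exp (b * (gain r ξ - estGain r ξ p js) - b ^ 2 * estVar ξ p js)
      ≤ 1 := by
  set φ : Fin T → (Fin T → Fin K) → ℝ := fun t js => p t js (js t) *
    exp (b * (∑ j, ξ t j * r t j - ξ t (js t) * r t (js t) / p t js (js t))
      - b ^ 2 * ∑ j, ξ t j / p t js j)
  have hφ : ∀ js, pathProb p js *
      exp (b * (gain r ξ - estGain r ξ p js) - b ^ 2 * estVar ξ p js) = ∏ t, φ t js := by
    intro js
    simp only [φ, prod_mul_distrib, ← exp_sum, pathProb, gain, estGain, estVar, mul_sum,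
      ← sum_sub_distrib]
  simp only [hφ]
  refine sum_prod_le_one_of_nonanticipating (fun t js => mul_nonneg (hppos t js (js t)).le (exp_pos _).le)
    (isNonanticipating_comp hppast fun t q k => q k *
      exp (b * (∑ j, ξ t j * r t j - ξ t k * r t k / q k) - b ^ 2 * ∑ j, ξ t j / q j))
    fun t js => ?_
  simp only [φ, Function.update_self, apply_update_self hppast]
  exact sum_mul_exp_importance_weighted_le_one (hppos t js) (hpsum t js) (hξ0 t) (hξ1 t) (hr t)
    hb0 hb1

theorem sum_pathProb_filter_not_le_le_exp_neg (hr : ∀ t j, r t j ∈ Set.Icc (0 : ℝ) 1)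
    (hξ0 : ∀ t j, 0 ≤ ξ t j) (hξ1 : ∀ t, ∑ j, ξ t j ≤ 1) (hppos : ∀ t js j, 0 < p t js j)
    (hpsum : ∀ t js, ∑ j, p t js j = 1) {L : ℝ} (hL : 0 < L) (hLKT : L ≤ K * T) :
    ∑ js with ¬ gain r ξ ≤ estGain r ξ p js + √L * (√(K * T) + 1 / √(K * T) * estVar ξ p js),
      pathProb p js ≤ exp (-L) := by
  set b := √L / √(K * T)
  have hb1 : b ≤ 1 := div_le_one_of_le₀ (sqrt_le_sqrt hLKT) (sqrt_nonneg _)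
  calc _ ≤ ∑ js with L ≤ b * (gain r ξ - estGain r ξ p js) - b ^ 2 * estVar ξ p js,
        pathProb p js := by
        refine sum_le_sum_of_subset_of_nonneg (fun js => ?_) fun js _ _ =>
          prod_nonneg fun t _ => (hppos t js (js t)).le
        simp only [mem_filter, mem_univ, true_and, not_le]
        refine fun hbad => le_of_lt (lt_of_not_ge fun h => hbad.not_ge ?_)
        have := le_sqrt_mul_add_of_mul_sub_sq_mul_le hL (hL.trans_le hLKT) h
        linarith
    _ ≤ exp (-L) := sum_filter_le_exp_neg_of_sum_mul_exp_le_one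
        (fun js => prod_nonneg fun t _ => (hppos t js (js t)).le)
        (sum_pathProb_mul_exp_le_one hppast hr hξ0 hξ1 hppos hpsum (by positivity) hb1) L

end Predictable

end Exp4P

open Classical in
theorem stmt_13_general (K T N : ℕ) (hN : 0 < N)
    (δ : ℝ) (hδ0 : 0 < δ) (hδ1 : δ < 1)
    (hcond : Real.log (N / δ) ≤ K * T)
    (r : Fin T → Fin K → ℝ) (hr : ∀ t j, r t j ∈ Set.Icc (0 : ℝ) 1)
    (ξ : Fin T → Fin N → Fin K → ℝ)
    (hξ0 : ∀ t i j, 0 ≤ ξ t i j) (hξ1 : ∀ t i, ∑ j, ξ t i j = 1)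
    (p : Fin T → (Fin T → Fin K) → Fin K → ℝ)
    (hppos : ∀ t js j, 0 < p t js j)
    (hpsum : ∀ t js, ∑ j, p t js j = 1)
    (hppast : ∀ (t : Fin T) (js js' : Fin T → Fin K),
      (∀ s : Fin T, s < t → js s = js' s) → p t js = p t js') :
    1 - δ ≤
      (∑ js ∈ Finset.univ.filter (fun js : Fin T → Fin K =>
          ∀ i : Fin N,
            (∑ t, ∑ j, ξ t i j * r t j) ≤
              (∑ t, ξ t i (js t) * r t (js t) / p t js (js t)) +
                Real.sqrt (Real.log (N / δ)) *
                  (Real.sqrt (K * T) +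
                    (1 / Real.sqrt (K * T)) * ∑ t, ∑ j, ξ t i j / p t js j)),
        ∏ t : Fin T, p t js (js t)) := by
  have hN1 : (1 : ℝ) ≤ N := Nat.one_le_cast.2 hN
  have hL : 0 < Real.log (N / δ) := log_pos ((one_lt_div hδ0).2 (by linarith))
  have : NeZero K := ⟨by rintro rfl; simp at hcond; linarith⟩
  have hfail : ∀ i, ∑ js with ¬ Exp4P.gain r (fun t => ξ t i) ≤
      Exp4P.estGain r (fun t => ξ t i) p js + √(Real.log (N / δ)) *
        (√(K * T) + 1 / √(K * T) * Exp4P.estVar (fun t => ξ t i) p js),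
      Exp4P.pathProb p js ≤ δ / N := fun i => by
    have hexp : exp (-Real.log (N / δ)) = δ / N := by
      rw [exp_neg, exp_log (div_pos (by linarith) hδ0), inv_div]
    rw [← hexp]
    exact Exp4P.sum_pathProb_filter_not_le_le_exp_neg hppast hr (hξ0 · i)
      (fun t => (hξ1 t i).le) hppos hpsum hL hcond
  calc 1 - δ = 1 - ∑ _i : Fin N, δ / N := by
        rw [sum_const, card_univ, Fintype.card_fin, nsmul_eq_mul, mul_div_cancel₀ _ (by linarith)]
    _ ≤ _ := by gcongr with i; exact hfail i
    _ ≤ _ := one_sub_sum_sum_filter_not_le_sum_filter_forall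
        (fun js => prod_nonneg fun t _ => (hppos t js (js t)).le)
        (Exp4P.sum_pathProb hppast hpsum) _

open Classical in
/-- Lemma 3 (upper confidence bound) for Exp4.P: with probability at least `1 - δ` over the
arm draws, every expert's expected return `G_i` is at most `Ĝ_i + √(ln(N/δ)) σ̂_i`. -/
theorem stmt_13 (K T N : ℕ) (hK : 0 < K) (hT : 0 < T) (hN : 0 < N)
    (δ : ℝ) (hδ0 : 0 < δ) (hδ1 : δ < 1)
    (hcond : Real.log (N / δ) ≤ K * T)
    (r : Fin T → Fin K → ℝ) (hr : ∀ t j, r t j ∈ Set.Icc (0 : ℝ) 1)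
    (ξ : Fin T → Fin N → Fin K → ℝ)
    (hξ0 : ∀ t i j, 0 ≤ ξ t i j) (hξ1 : ∀ t i, ∑ j, ξ t i j = 1)
    (p : Fin T → (Fin T → Fin K) → Fin K → ℝ)
    (hppos : ∀ t js j, 0 < p t js j)
    (hpsum : ∀ t js, ∑ j, p t js j = 1)
    (hppast : ∀ (t : Fin T) (js js' : Fin T → Fin K),
      (∀ s : Fin T, s < t → js s = js' s) → p t js = p t js') :
    1 - δ ≤
      (∑ js ∈ Finset.univ.filter (fun js : Fin T → Fin K =>
          ∀ i : Fin N,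
            (∑ t, ∑ j, ξ t i j * r t j) ≤
              (∑ t, ξ t i (js t) * r t (js t) / p t js (js t)) +
                Real.sqrt (Real.log (N / δ)) *
                  (Real.sqrt (K * T) +
                    (1 / Real.sqrt (K * T)) * ∑ t, ∑ j, ξ t i j / p t js j)),
        ∏ t : Fin T, p t js (js t)) :=
  stmt_13_general K T N hN δ hδ0 hδ1 hcond r hr ξ hξ0 hξ1 p hppos hpsum hppast
end
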